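/- arXiv:1409.7793 — 5 statements merged into one kernel-verified Lean document; each statement's English description precedes it below -/
import Mathlib

section
/- For every integer n ≥ 1 define μ_n : ℝ → ℝ by μ_n(t) = e^{-nt/2} · Σ_{k=0}^{n-1} ((-t)^k / k!) · n^{k-1} · binom(n, k+1). Then μ_n(0) = 1 for all n ≥ 1, and for every t ∈ ℝ and every n ≥ 1, μ_n is differentiable at t with μ_n'(t) = -(n/2)·μ_n(t) - (n/2)·Σ_{k=1}^{n-1} μ_k(t)·μ_{n-k}(t). -/
/-!
Write `μ_n(t) = e^{-nt/2} g_n(-t)` with `g_n(x) = Σ_a n^{a-1} C(n, a+1) x^a / a!`. The claim is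
then `g_n' = (n/2) Σ_{k=1}^{n-1} g_k g_{n-k}`, i.e. `∂_x G = z G ∂_z G` for the generating series
`G(x, z) = Σ_n g_n(x) z^n`. Lagrange inversion predicts the closed form
`[z^n] G^p = Σ_a p n^a / (p + a) · C(n-1, p+a-1) · x^a / a!`; for `p = 1` it is the definition
of `g_n`, and its derivative is `n/2` times the closed form for `p = 2`, so the closed form for
`p = 2` is the claim.

The closed form is proved by strong induction on `n`. If it holds in all degrees below `n`, the
product rule and `∂_x G = z G ∂_z G` in those degrees give
`∂_x [z^n] G^p = p n / (p+1) · [z^n] G^{p+1}` for `p ≥ 2`, and the closed forms satisfy the same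
relation. Both sides agree at `x = 0`, where `G = z / (1 - z)`, and both vanish for `p > n`, so
downward induction on `p` identifies them.
-/

/-- The `n`-th moment of the spectral measure of the free unitary Brownian motion at time `t`:
`μ_n(t) = e^{-nt/2} · Σ_{k=0}^{n-1} ((-t)^k / k!) · n^{k-1} · binom(n, k+1)`. -/
noncomputable def freeUnitaryMoment (n : ℕ) (t : ℝ) : ℝ :=
  Real.exp (-((n : ℝ) * t) / 2) *
    ∑ k ∈ Finset.range n,
      ((-t) ^ k / (Nat.factorial k : ℝ)) * (n : ℝ) ^ ((k : ℤ) - 1) * (n.choose (k + 1) : ℝ)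

open Finset PowerSeries

theorem Finset.sum_Ico_eq_sum_antidiagonal {M : Type*} [AddCommMonoid M] (f : ℕ → ℕ → M)
    {n : ℕ} (h0 : f 0 n = 0) (hn : f n 0 = 0) :
    ∑ k ∈ Ico 1 n, f k (n - k) = ∑ ij ∈ antidiagonal n, f ij.1 ij.2 := by
  rw [Finset.Nat.sum_antidiagonal_eq_sum_range_succ f n]
  rcases Nat.eq_zero_or_pos n with rfl | hpos
  · simp [h0]
  · rw [sum_range_succ, Nat.sub_self, hn, add_zero, range_eq_Ico,
      sum_eq_sum_Ico_succ_bot hpos, Nat.sub_zero, h0, zero_add]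

theorem eq_of_hasDerivAt_eq {E : Type*} [NormedAddCommGroup E] [NormedSpace ℝ E]
    {f g f' : ℝ → E} (hf : ∀ x, HasDerivAt f (f' x) x) (hg : ∀ x, HasDerivAt g (f' x) x)
    (a : ℝ) (ha : f a = g a) : f = g :=
  eq_of_fderiv_eq (fun x => (hf x).differentiableAt) (fun x => (hg x).differentiableAt)
    (fun x => by rw [(hf x).hasFDerivAt.fderiv, (hg x).hasFDerivAt.fderiv]) a ha

namespace PowerSeries

section CommSemiring

variable {R : Type*} [CommSemiring R]

theorem coeff_X_mul_derivative (F : R⟦X⟧) (k : ℕ) :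
    coeff k (X * d⁄dX R F) = k * coeff k F := by
  cases k with
  | zero => simp
  | succ k => rw [coeff_succ_X_mul, coeff_derivative]; push_cast; ring

theorem X_mul_derivative_pow (G : R⟦X⟧) (r : ℕ) :
    X * d⁄dX R (G ^ (r + 1)) = (r + 1) • (X * d⁄dX R G * G ^ r) := by
  rw [derivative_pow, Nat.add_sub_cancel, nsmul_eq_mul]
  push_cast
  ring

theorem coeff_X_mul_derivative_mul (F H : R⟦X⟧) (m : ℕ) :
    coeff m (X * d⁄dX R F * H) =
      ∑ ij ∈ antidiagonal m, (ij.1 : R) * coeff ij.1 F * coeff ij.2 H := by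
  rw [coeff_mul]
  refine sum_congr rfl fun ij _ => ?_
  rw [coeff_X_mul_derivative]

end CommSemiring

/-- When `∂_x [z^i] G = (i/2) [z^i] G^2` and `∂_x [z^j] G^q = q j / (q+1) [z^j] G^{q+1}`, the
left-hand side is `∂_x [z^m] G^{q+1}` by the product rule. All three sums are multiples of
`[z^m] (z G' G^{q+1})`, because `z ∂_z (G^p) = p G^{p-1} z ∂_z G`. -/
theorem sum_antidiagonal_coeff_pow_leibniz {K : Type*} [Field K] [CharZero K]
    (G : K⟦X⟧) (q m : ℕ) :
    ∑ ij ∈ antidiagonal m, ((ij.1 : K) / 2 * coeff ij.1 (G ^ 2) * coeff ij.2 (G ^ q) +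
        coeff ij.1 G * (q * ij.2 / (q + 1) * coeff ij.2 (G ^ (q + 1)))) =
      (q + 1) * m / (q + 2) * coeff m (G ^ (q + 2)) := by
  obtain ⟨W, hW⟩ : ∃ W, coeff m (X * d⁄dX K G * G ^ (q + 1)) = W := ⟨_, rfl⟩
  have hA : ∑ ij ∈ antidiagonal m, (ij.1 : K) * coeff ij.1 (G ^ 2) * coeff ij.2 (G ^ q) =
      2 * W := by
    rw [← coeff_X_mul_derivative_mul, X_mul_derivative_pow G 1, smul_mul_assoc, map_nsmul,
      mul_assoc, ← pow_add, add_comm 1 q, hW, nsmul_eq_mul]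
    norm_num
  have hB : ∑ ij ∈ antidiagonal m, (ij.2 : K) * coeff ij.2 (G ^ (q + 1)) * coeff ij.1 G =
      (q + 1) * W := by
    rw [← Finset.Nat.sum_antidiagonal_swap]
    simp only [Prod.fst_swap, Prod.snd_swap]
    rw [← coeff_X_mul_derivative_mul, X_mul_derivative_pow, smul_mul_assoc, map_nsmul,
      mul_assoc, ← pow_succ, hW, nsmul_eq_mul]
    push_cast
    rfl
  have hC : (m : K) * coeff m (G ^ (q + 2)) = (q + 2) * W := by
    rw [← coeff_X_mul_derivative, X_mul_derivative_pow, map_nsmul, hW, nsmul_eq_mul]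
    push_cast
    ring
  have hq1 : (q : K) + 1 ≠ 0 := Nat.cast_add_one_ne_zero q
  have hq2 : (q : K) + 2 ≠ 0 := by exact_mod_cast Nat.succ_ne_zero (q + 1)
  calc _ = 1 / 2 * ∑ ij ∈ antidiagonal m, (ij.1 : K) * coeff ij.1 (G ^ 2) * coeff ij.2 (G ^ q) +
        q / (q + 1) *
          ∑ ij ∈ antidiagonal m, (ij.2 : K) * coeff ij.2 (G ^ (q + 1)) * coeff ij.1 G := by
        rw [mul_sum, mul_sum, ← sum_add_distrib]
        refine sum_congr rfl fun ij _ => ?_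
        field_simp
    _ = (q + 1) / (q + 2) * ((m : K) * coeff m (G ^ (q + 2))) := by
        rw [hA, hB, hC]
        field_simp
        ring
    _ = _ := by ring

end PowerSeries

namespace FreeUnitaryMoment

noncomputable def truncEGF (β : ℕ → ℝ) (N : ℕ) (x : ℝ) : ℝ :=
  ∑ a ∈ range N, β a * x ^ a / a.factorial

@[simp]
theorem truncEGF_zero (β : ℕ → ℝ) : truncEGF β 0 = 0 :=
  funext fun _ => sum_range_zero _

theorem truncEGF_succ (β : ℕ → ℝ) (N : ℕ) (x : ℝ) :
    truncEGF β (N + 1) x = truncEGF β N x + β N * x ^ N / N.factorial :=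
  sum_range_succ _ N

theorem truncEGF_apply_zero (β : ℕ → ℝ) {N : ℕ} (hN : N ≠ 0) : truncEGF β N 0 = β 0 := by
  rw [truncEGF, sum_eq_single_of_mem 0 (mem_range.2 (Nat.pos_of_ne_zero hN))]
  · simp
  · intro a _ ha
    simp [ha]

theorem hasDerivAt_truncEGF_succ (β : ℕ → ℝ) (N : ℕ) (x : ℝ) :
    HasDerivAt (truncEGF β (N + 1)) (truncEGF (fun a => β (a + 1)) N x) x := by
  induction N with
  | zero =>
    have hconst : truncEGF β 1 = fun _ => β 0 := funext fun y => by simp [truncEGF]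
    rw [hconst]
    exact hasDerivAt_const x (β 0)
  | succ N ih =>
    have hterm : HasDerivAt (fun y => β (N + 1) * y ^ (N + 1) / (N + 1).factorial)
        (β (N + 1) * x ^ N / N.factorial) x := by
      refine (((hasDerivAt_pow (N + 1) x).const_mul (β (N + 1))).div_const
        ((N + 1).factorial : ℝ)).congr_deriv ?_
      rw [Nat.factorial_succ]
      push_cast
      field_simp
    rw [funext (truncEGF_succ β (N + 1)), truncEGF_succ]
    exact ih.add hterm

theorem hasDerivAt_truncEGF {β : ℕ → ℝ} {N : ℕ} (hβ : β N = 0) (x : ℝ) :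
    HasDerivAt (truncEGF β N) (truncEGF (fun a => β (a + 1)) N x) x := by
  cases N with
  | zero => simp
  | succ N =>
    rw [truncEGF_succ, hβ, zero_mul, zero_div, add_zero]
    exact hasDerivAt_truncEGF_succ β N x

/-- The coefficient of `x^a / a!` in `[z^n] G(x, z)^p` predicted by Lagrange inversion. -/
noncomputable def lagrangeCoeff (p n a : ℕ) : ℝ :=
  p * n ^ a / (p + a) * (n - 1).choose (p + a - 1)

noncomputable def lagrangePoly (p n : ℕ) : ℝ → ℝ := truncEGF (lagrangeCoeff p n) n

theorem lagrangeCoeff_succ_right (p n a : ℕ) :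
    lagrangeCoeff p n (a + 1) = p * n / (p + 1) * lagrangeCoeff (p + 1) n a := by
  simp only [lagrangeCoeff, show p + (a + 1) - 1 = p + 1 + a - 1 by omega]
  have : (p : ℝ) + 1 + a ≠ 0 := by positivity
  push_cast
  field_simp
  ring

theorem lagrangeCoeff_zero_right {p : ℕ} (hp : p ≠ 0) (n : ℕ) :
    lagrangeCoeff p n 0 = (n - 1).choose (p - 1) := by
  simp [lagrangeCoeff, hp]

theorem lagrangeCoeff_one {n : ℕ} (hn : n ≠ 0) (a : ℕ) :
    lagrangeCoeff 1 n a = (n : ℝ) ^ ((a : ℤ) - 1) * n.choose (a + 1) := by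
  obtain ⟨m, rfl⟩ : ∃ m, n = m + 1 := ⟨n - 1, by omega⟩
  have hchoose : ((m : ℝ) + 1) * m.choose a = (m + 1).choose (a + 1) * (a + 1) := by
    exact_mod_cast Nat.add_one_mul_choose_eq m a
  rw [lagrangeCoeff, zpow_sub_one₀ (by positivity), zpow_natCast, Nat.add_sub_cancel,
    add_comm 1 a, Nat.add_sub_cancel]
  push_cast
  field_simp
  linear_combination hchoose

theorem lagrangePoly_apply_zero {p n : ℕ} (hp : p ≠ 0) (hn : n ≠ 0) :
    lagrangePoly p n 0 = (n - 1).choose (p - 1) := by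
  rw [lagrangePoly, truncEGF_apply_zero _ hn, lagrangeCoeff_zero_right hp]

theorem lagrangePoly_eq_zero_of_lt {p n : ℕ} (h : n < p) : lagrangePoly p n = 0 := by
  funext x
  simp only [lagrangePoly, truncEGF, Pi.zero_apply]
  refine sum_eq_zero fun a ha => ?_
  rw [lagrangeCoeff, Nat.choose_eq_zero_of_lt (by grind)]
  simp

theorem hasDerivAt_lagrangePoly {p : ℕ} (hp : p ≠ 0) (n : ℕ) (x : ℝ) :
    HasDerivAt (lagrangePoly p n) (p * n / (p + 1) * lagrangePoly (p + 1) n x) x := by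
  rcases Nat.eq_zero_or_pos n with rfl | hn
  · simp [lagrangePoly]
  · have htop : lagrangeCoeff p n n = 0 := by
      rw [lagrangeCoeff, Nat.choose_eq_zero_of_lt (by omega)]
      simp
    refine (hasDerivAt_truncEGF htop x).congr_deriv ?_
    simp only [lagrangePoly, truncEGF, mul_sum, lagrangeCoeff_succ_right]
    refine sum_congr rfl fun a _ => ?_
    ring

noncomputable def momentSeries (x : ℝ) : ℝ⟦X⟧ := PowerSeries.mk fun n => lagrangePoly 1 n x

theorem coeff_momentSeries (n : ℕ) (x : ℝ) : coeff n (momentSeries x) = lagrangePoly 1 n x :=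
  coeff_mk _ _

theorem constantCoeff_momentSeries (x : ℝ) : constantCoeff (momentSeries x) = 0 := by
  simp [momentSeries, lagrangePoly]

theorem coeff_momentSeries_pow_of_lt {p n : ℕ} (h : n < p) (x : ℝ) :
    coeff n (momentSeries x ^ p) = 0 :=
  X_pow_dvd_iff.1 (pow_dvd_pow_of_dvd (X_dvd_iff.2 (constantCoeff_momentSeries x)) p) n h

theorem momentSeries_zero : momentSeries 0 = X * PowerSeries.mk 1 := by
  ext n
  cases n with
  | zero => simp [momentSeries, lagrangePoly]
  | succ n =>
    rw [coeff_succ_X_mul, coeff_momentSeries,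
      lagrangePoly_apply_zero one_ne_zero n.succ_ne_zero]
    simp

theorem coeff_momentSeries_zero_pow {p n : ℕ} (hp : p ≠ 0) (hn : n ≠ 0) :
    coeff n (momentSeries 0 ^ p) = (n - 1).choose (p - 1) := by
  obtain ⟨d, rfl⟩ : ∃ d, p = d + 1 := ⟨p - 1, by omega⟩
  rw [momentSeries_zero, mul_pow, mk_one_pow_eq_mk_choose_add, coeff_X_pow_mul',
    Nat.add_sub_cancel]
  split_ifs with h
  · rw [coeff_mk, show d + (n - (d + 1)) = n - 1 by omega]
  · rw [Nat.choose_eq_zero_of_lt (by omega), Nat.cast_zero]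

theorem coeff_momentSeries_pow_succ {q : ℕ} (hq : q ≠ 0) (n : ℕ) (x : ℝ) :
    coeff n (momentSeries x ^ (q + 1)) =
      ∑ k ∈ Ico 1 n, lagrangePoly 1 k x * coeff (n - k) (momentSeries x ^ q) := by
  have hsum := sum_Ico_eq_sum_antidiagonal
    (fun i j => coeff i (momentSeries x) * coeff j (momentSeries x ^ q)) (n := n)
    (by simp [constantCoeff_momentSeries])
    (by rw [coeff_momentSeries_pow_of_lt (Nat.pos_of_ne_zero hq), mul_zero])
  rw [pow_succ', coeff_mul]
  simpa only [coeff_momentSeries] using hsum.symm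

theorem hasDerivAt_coeff_momentSeries_pow_succ {n q : ℕ} (hq : q ≠ 0)
    (ih : ∀ m < n, ∀ p ≠ 0, ∀ x, coeff m (momentSeries x ^ p) = lagrangePoly p m x) (x : ℝ) :
    HasDerivAt (fun y => coeff n (momentSeries y ^ (q + 1)))
      ((q + 1) * n / (q + 2) * coeff n (momentSeries x ^ (q + 2))) x := by
  have hfun : (fun y => coeff n (momentSeries y ^ (q + 1))) =
      fun y => ∑ k ∈ Ico 1 n, lagrangePoly 1 k y * lagrangePoly q (n - k) y := by
    funext y
    rw [coeff_momentSeries_pow_succ hq]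
    refine sum_congr rfl fun k hk => ?_
    rw [ih (n - k) (by grind) q hq]
  have hsum := sum_Ico_eq_sum_antidiagonal (n := n) (fun i j =>
      (i : ℝ) / 2 * coeff i (momentSeries x ^ 2) * coeff j (momentSeries x ^ q) +
        coeff i (momentSeries x) * (q * j / (q + 1) * coeff j (momentSeries x ^ (q + 1))))
    (by simp [constantCoeff_momentSeries])
    (by simp [coeff_momentSeries_pow_of_lt (Nat.pos_of_ne_zero hq)])
  rw [sum_antidiagonal_coeff_pow_leibniz] at hsum
  rw [hfun, ← hsum]
  refine (HasDerivAt.fun_sum fun k _ => (hasDerivAt_lagrangePoly one_ne_zero k x).mul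
    (hasDerivAt_lagrangePoly hq (n - k) x)).congr_deriv (sum_congr rfl fun k hk => ?_)
  have hk : 1 ≤ k ∧ k < n := mem_Ico.1 hk
  rw [coeff_momentSeries, ih k hk.2 2 two_ne_zero, ih (n - k) (by omega) q hq,
    ih (n - k) (by omega) (q + 1) (by omega)]
  push_cast
  ring

theorem coeff_momentSeries_pow_eq_of_forall_lt {n : ℕ} (hn : n ≠ 0)
    (ih : ∀ m < n, ∀ p ≠ 0, ∀ x, coeff m (momentSeries x ^ p) = lagrangePoly p m x)
    {p : ℕ} (hp : p ≠ 0) :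
    (fun x => coeff n (momentSeries x ^ p)) = lagrangePoly p n := by
  obtain ⟨d, hd⟩ : ∃ d, n < p + d := ⟨n + 1, by omega⟩
  induction d generalizing p with
  | zero =>
    rw [add_zero] at hd
    rw [lagrangePoly_eq_zero_of_lt hd]
    exact funext (coeff_momentSeries_pow_of_lt hd)
  | succ d ihd =>
    obtain rfl | ⟨q, hq, rfl⟩ : p = 1 ∨ ∃ q ≠ 0, p = q + 1 := by
      rcases p with _ | _ | q <;> simp_all
    · exact funext fun x => by rw [pow_one, coeff_momentSeries]
    · have hnext := ihd (p := q + 1 + 1) (by omega) (by omega)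
      refine eq_of_hasDerivAt_eq (fun x => hasDerivAt_coeff_momentSeries_pow_succ hq ih x)
        (fun x => (hasDerivAt_lagrangePoly hp n x).congr_deriv ?_) 0 ?_
      · rw [← congrFun hnext x]
        push_cast
        ring
      · rw [coeff_momentSeries_zero_pow hp hn, lagrangePoly_apply_zero hp hn]

theorem coeff_momentSeries_pow {p : ℕ} (hp : p ≠ 0) (n : ℕ) (x : ℝ) :
    coeff n (momentSeries x ^ p) = lagrangePoly p n x := by
  induction n using Nat.strong_induction_on generalizing p x with
  | _ n ih =>
    rcases eq_or_ne n 0 with rfl | hn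
    · simp [coeff_momentSeries_pow_of_lt (Nat.pos_of_ne_zero hp), lagrangePoly]
    · exact congrFun (coeff_momentSeries_pow_eq_of_forall_lt hn
        (fun m hm p hp x => ih m hm hp x) hp) x

theorem hasDerivAt_lagrangePoly_one (n : ℕ) (x : ℝ) :
    HasDerivAt (lagrangePoly 1 n)
      (n / 2 * ∑ k ∈ Ico 1 n, lagrangePoly 1 k x * lagrangePoly 1 (n - k) x) x := by
  refine (hasDerivAt_lagrangePoly one_ne_zero n x).congr_deriv ?_
  rw [← coeff_momentSeries_pow two_ne_zero, coeff_momentSeries_pow_succ one_ne_zero]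
  simp only [pow_one, coeff_momentSeries]
  norm_num

theorem freeUnitaryMoment_eq (n : ℕ) (t : ℝ) :
    freeUnitaryMoment n t = Real.exp (-(n * t) / 2) * lagrangePoly 1 n (-t) := by
  rcases eq_or_ne n 0 with rfl | hn
  · simp [freeUnitaryMoment, lagrangePoly]
  · rw [freeUnitaryMoment, lagrangePoly, truncEGF]
    congr 1
    refine sum_congr rfl fun k _ => ?_
    rw [lagrangeCoeff_one hn]
    ring

end FreeUnitaryMoment

open FreeUnitaryMoment

/-- `μ_n(0) = 1` for all `n ≥ 1`, and each `μ_n` is differentiable with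
`μ_n'(t) = -(n/2)·μ_n(t) - (n/2)·Σ_{k=1}^{n-1} μ_k(t)·μ_{n-k}(t)`. -/
theorem freeUnitaryMoment_initial_and_deriv :
    ∀ n : ℕ, 1 ≤ n →
      freeUnitaryMoment n 0 = 1 ∧
        ∀ t : ℝ,
          HasDerivAt (freeUnitaryMoment n)
            (-((n : ℝ) / 2) * freeUnitaryMoment n t -
              ((n : ℝ) / 2) *
                ∑ k ∈ Finset.Ico 1 n, freeUnitaryMoment k t * freeUnitaryMoment (n - k) t)
            t := by
  intro n hn
  refine ⟨by simp [freeUnitaryMoment_eq, lagrangePoly_apply_zero one_ne_zero (by omega : n ≠ 0)],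
    fun t => ?_⟩
  have hexp : HasDerivAt (fun s => Real.exp (-(n * s) / 2))
      (Real.exp (-(n * t) / 2) * -(n / 2)) t :=
    (((hasDerivAt_id' t).const_mul (n : ℝ)).fun_neg.div_const 2).exp.congr_deriv (by ring)
  have hpoly := (hasDerivAt_lagrangePoly_one n (-t)).comp t (hasDerivAt_neg t)
  have hprod : ∀ k ∈ Ico 1 n, freeUnitaryMoment k t * freeUnitaryMoment (n - k) t =
      Real.exp (-(n * t) / 2) * (lagrangePoly 1 k (-t) * lagrangePoly 1 (n - k) (-t)) := by
    intro k hk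
    rw [freeUnitaryMoment_eq, freeUnitaryMoment_eq, Nat.cast_sub (mem_Ico.1 hk).2.le,
      mul_mul_mul_comm, ← Real.exp_add]
    ring_nf
  rw [funext (freeUnitaryMoment_eq n)]
  refine (hexp.mul hpoly).congr_deriv ?_
  rw [Function.comp_apply, sum_congr rfl hprod, ← mul_sum]
  ring
end

section
/- (Duhamel's formula) For every p ≥ 1 and all matrices A, B ∈ M_p(ℂ), exp(A + B) − exp(A) = ∫_0^1 exp(s·(A+B)) · B · exp((1−s)·A) ds, where exp denotes the matrix exponential and the integral is the Bochner integral of the M_p(ℂ)-valued continuous function s ↦ exp(s(A+B))·B·exp((1−s)A) over [0,1] with Lebesgue measure. -/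
/-!
`F s = exp (s • (A + B)) * exp ((1 - s) • A)` runs from `exp A` to `exp (A + B)` as `s` goes from
`0` to `1`, and by the product rule
`F' s = exp (s • (A + B)) * (A + B) * exp ((1 - s) • A) - exp (s • (A + B)) * A * exp ((1 - s) • A)`,
which is the integrand; the formula is the fundamental theorem of calculus for `F`.

The integral in the statement is taken for the entrywise sup norm on matrices, which is not
submultiplicative. The calculus is therefore done for the `ℓ∞`-operator norm, and the result is
transported along the identity, a continuous linear equivalence between the two normed structures.
-/

open MeasureTheory

section BanachAlgebra

variable {𝔸 : Type*} [NormedRing 𝔸] [NormedAlgebra ℝ 𝔸] [CompleteSpace 𝔸]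

open NormedSpace

theorem hasDerivAt_exp_smul_add_mul_exp_one_sub_smul (A B : 𝔸) (t : ℝ) :
    HasDerivAt (fun s : ℝ => exp (s • (A + B)) * exp ((1 - s) • A))
      (exp (t • (A + B)) * B * exp ((1 - t) • A)) t := by
  have hfst := hasDerivAt_exp_smul_const (𝕂 := ℝ) (A + B) t
  have hsnd : HasDerivAt (fun s : ℝ => exp ((1 - s) • A)) (-(A * exp ((1 - t) • A))) t := by
    simpa [Function.comp_def] using
      (hasDerivAt_exp_smul_const' (𝕂 := ℝ) A (1 - t)).scomp t ((hasDerivAt_id t).const_sub 1)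
  refine (hfst.mul hsnd).congr_deriv ?_
  noncomm_ring

theorem exp_add_sub_exp_eq_intervalIntegral (A B : 𝔸) :
    exp (A + B) - exp A = ∫ s in (0 : ℝ)..1, exp (s • (A + B)) * B * exp ((1 - s) • A) := by
  have hcont : Continuous fun s : ℝ => exp (s • (A + B)) * B * exp ((1 - s) • A) :=
    ((differentiable_exp_smul_const ℝ (A + B)).continuous.mul continuous_const).mul
      ((differentiable_exp_smul_const ℝ A).continuous.comp (continuous_const.sub continuous_id))
  rw [intervalIntegral.integral_eq_sub_of_hasDerivAt
    (fun t _ => hasDerivAt_exp_smul_add_mul_exp_one_sub_smul A B t)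
    (hcont.intervalIntegrable 0 1)]
  simp

end BanachAlgebra

section LinftyOp

open scoped Matrix.Norms.Operator

theorem Matrix.exp_add_sub_exp_eq_setIntegral_Icc {n 𝔸 : Type*} [Fintype n] [DecidableEq n]
    [NormedRing 𝔸] [NormedAlgebra ℝ 𝔸] [CompleteSpace 𝔸] (A B : Matrix n n 𝔸) :
    NormedSpace.exp (A + B) - NormedSpace.exp A =
      ∫ s in Set.Icc (0 : ℝ) 1,
        NormedSpace.exp (s • (A + B)) * B * NormedSpace.exp ((1 - s) • A) := by
  -- Not found by instance search: the product uniformity is defeq, but not reducibly,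
  -- to the uniformity of the operator norm.
  have : @CompleteSpace (Matrix n n 𝔸) PseudoMetricSpace.toUniformSpace :=
    inferInstanceAs (CompleteSpace (n → n → 𝔸))
  rw [integral_Icc_eq_integral_Ioc, ← intervalIntegral.integral_of_le zero_le_one]
  exact exp_add_sub_exp_eq_intervalIntegral A B

end LinftyOp

attribute [local instance] Matrix.normedAddCommGroup Matrix.normedSpace

theorem Matrix.linftyOp_integral_eq_integral {m n α E : Type*} [Fintype m] [Fintype n]
    [NormedAddCommGroup E] [NormedSpace ℝ E] [MeasurableSpace α] (μ : Measure α)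
    (f : α → Matrix m n E) :
    (letI := Matrix.linftyOpNormedAddCommGroup (m := m) (n := n) (α := E)
     letI := Matrix.linftyOpNormedSpace (m := m) (n := n) (α := E) (R := ℝ)
     ∫ x, f x ∂μ) = ∫ x, f x ∂μ :=
  @ContinuousLinearEquiv.integral_comp_comm α (Matrix m n E) (Matrix m n E) _ μ ℝ _ _ _
    Matrix.linftyOpNormedAddCommGroup Matrix.linftyOpNormedSpace Matrix.linftyOpNormedSpace _
    (ContinuousLinearEquiv.refl ℝ _) f

theorem matrix_duhamel_general (p : ℕ) (A B : Matrix (Fin p) (Fin p) ℂ) :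
    NormedSpace.exp (A + B) - NormedSpace.exp A =
      ∫ s in Set.Icc (0 : ℝ) 1,
        NormedSpace.exp (s • (A + B)) * B * NormedSpace.exp ((1 - s) • A) := by
  rw [← Matrix.linftyOp_integral_eq_integral]
  exact Matrix.exp_add_sub_exp_eq_setIntegral_Icc A B

/-- Duhamel's formula for `p × p` complex matrices:
`exp(A + B) − exp(A) = ∫_0^1 exp(s(A+B)) · B · exp((1−s)A) ds`,
where the integral is the Bochner integral over `[0,1]` with Lebesgue measure. -/
theorem matrix_duhamel (p : ℕ) (hp : 1 ≤ p) (A B : Matrix (Fin p) (Fin p) ℂ) :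
    NormedSpace.exp (A + B) - NormedSpace.exp A =
      ∫ s in Set.Icc (0 : ℝ) 1,
        NormedSpace.exp (s • (A + B)) * B * NormedSpace.exp ((1 - s) • A) :=
  matrix_duhamel_general p A B
end

section
/- (Iterated Duhamel / Dyson expansion with remainder) Let p ≥ 1, let L, D ∈ M_p(ℂ), and let g ≥ 1. For j ≥ 1 let Δ_j = {(s_1,…,s_j) ∈ ℝ^j : 0 ≤ s_1 ≤ s_2 ≤ … ≤ s_j ≤ 1} equipped with j-dimensional Lebesgue measure, and define I_j = ∫_{Δ_j} exp(s_1 L)·D·exp((s_2−s_1)L)·D ⋯ D·exp((1−s_j)L) ds (a product with j factors of D interlaced with j+1 exponentials of increments of L), I_0 = exp(L), and R_g = ∫_{Δ_g} exp(s_1(L+D))·D·exp((s_2−s_1)L)·D ⋯ D·exp((1−s_g)L) ds. Then exp(L + D) = Σ_{j=0}^{g−1} I_j + R_g. -/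
/-!
Differentiating `v ↦ exp(v(L+D)) · exp((t-v)L)` gives `exp(v(L+D)) · D · exp((t-v)L)`, so the
fundamental theorem of calculus yields Duhamel's formula
`exp(t(L+D)) = exp(tL) + ∫₀ᵗ exp(u(L+D)) D exp((t-u)L) du`.
Applying it to the leading factor `exp(s₁(L+D))` of the integrand of `R_g` splits off the
integrand of `I_g` and leaves an integral over the new variable `0 ≤ u ≤ s₁`; by Fubini, the
integral over `Δ_g` of that integral is `R_{g+1}`, which is an integral over `Δ_{g+1}`. Hence
`R_g = I_g + R_{g+1}`, and induction from `g = 1`, where this is Duhamel's formula at `t = 1`,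
gives the expansion.
-/

open MeasureTheory

attribute [local instance] Matrix.normedAddCommGroup Matrix.normedSpace

/-- The ordered simplex `Δ_j = {0 ≤ s_1 ≤ s_2 ≤ … ≤ s_j ≤ 1} ⊆ ℝ^j`. -/
def orderedSimplex (j : ℕ) : Set (Fin j → ℝ) :=
  {s | Monotone s ∧ ∀ i, s i ∈ Set.Icc (0 : ℝ) 1}

/-- The integrand of the iterated Duhamel (Dyson) expansion:
`dysonProd L D j s a = exp((s_1 − a)L) · D · exp((s_2 − s_1)L) · D ⋯ D · exp((1 − s_j)L)`,
a product with `j` factors of `D` interlaced with `j+1` exponentials of increments of `L`. -/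
noncomputable def dysonProd {p : ℕ} (L D : Matrix (Fin p) (Fin p) ℂ) :
    (j : ℕ) → (Fin j → ℝ) → ℝ → Matrix (Fin p) (Fin p) ℂ
  | 0, _, a => NormedSpace.exp ((1 - a) • L)
  | j + 1, s, a =>
      NormedSpace.exp ((s 0 - a) • L) * D * dysonProd L D j (fun i => s i.succ) (s 0)

open NormedSpace Set

theorem hasDerivAt_exp_smul_mul_exp_smul_mul {𝔸 : Type*} [NormedRing 𝔸] [NormedAlgebra ℝ 𝔸]
    [CompleteSpace 𝔸] (A B C : 𝔸) (t u : ℝ) :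
    HasDerivAt (fun v : ℝ => exp (v • A) * exp ((t - v) • B) * C)
      (exp (u • A) * (A - B) * exp ((t - u) • B) * C) u := by
  have hB : HasDerivAt (fun v : ℝ => exp ((t - v) • B)) (-(B * exp ((t - u) • B))) u := by
    simpa [Function.comp_def] using
      (hasDerivAt_exp_smul_const' B (t - u)).scomp u ((hasDerivAt_id u).const_sub t)
  refine (((hasDerivAt_exp_smul_const A u).mul hB).mul_const C).congr_deriv ?_
  noncomm_ring

namespace Matrix

variable {n 𝕂 : Type*} [Fintype n] [DecidableEq n] [RCLike 𝕂]

/- The sup norm on matrices is not submultiplicative; the two lemmas below are proved for the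
`L∞`-operator norm, whose topology is definitionally the same. -/

@[fun_prop]
theorem continuous_exp : Continuous (exp : Matrix n n 𝕂 → Matrix n n 𝕂) :=
  @NormedSpace.exp_continuous _ Matrix.linftyOpNormedRing Matrix.linftyOpNormedAlgebra
    (FiniteDimensional.complete ℝ _)

theorem hasDerivAt_exp_smul_mul_exp_smul_mul (A B C : Matrix n n 𝕂) (t u : ℝ) :
    HasDerivAt (fun v : ℝ => exp (v • A) * exp ((t - v) • B) * C)
      (exp (u • A) * (A - B) * exp ((t - u) • B) * C) u :=
  hasDerivAt_iff_tendsto_slope.2 <| hasDerivAt_iff_tendsto_slope.1 <|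
    @_root_.hasDerivAt_exp_smul_mul_exp_smul_mul _ Matrix.linftyOpNormedRing
      Matrix.linftyOpNormedAlgebra (FiniteDimensional.complete ℝ _) A B C t u

theorem exp_smul_mul_eq_add_integral (A B C : Matrix n n 𝕂) {t : ℝ} (ht : 0 ≤ t) :
    exp (t • A) * C =
      exp (t • B) * C + ∫ u in Icc 0 t, exp (u • A) * (A - B) * exp ((t - u) • B) * C := by
  have hFTC := intervalIntegral.integral_eq_sub_of_hasDerivAt
    (fun u _ => hasDerivAt_exp_smul_mul_exp_smul_mul A B C t u)
    (Continuous.intervalIntegrable (by fun_prop) 0 t)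
  rw [integral_Icc_eq_integral_Ioc, ← intervalIntegral.integral_of_le ht, hFTC]
  simp

end Matrix

section OrderedSimplex

variable {E : Type*} [NormedAddCommGroup E]

theorem isClosed_orderedSimplex (j : ℕ) : IsClosed (orderedSimplex j) := by
  rw [orderedSimplex, ofPred_and, ofPred_forall]
  exact isClosed_monotone.inter <|
    isClosed_iInter fun i => isClosed_Icc.preimage (continuous_apply i)

theorem isCompact_orderedSimplex (j : ℕ) : IsCompact (orderedSimplex j) :=
  isCompact_Icc.of_isClosed_subset (isClosed_orderedSimplex j) fun _ hs =>
    ⟨fun i => (hs.2 i).1, fun i => (hs.2 i).2⟩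

theorem measurableSet_orderedSimplex (j : ℕ) : MeasurableSet (orderedSimplex j) :=
  (isClosed_orderedSimplex j).measurableSet

theorem Continuous.integrableOn_orderedSimplex {j : ℕ} {F : (Fin j → ℝ) → E} (hF : Continuous F) :
    IntegrableOn F (orderedSimplex j) :=
  hF.continuousOn.integrableOn_compact (isCompact_orderedSimplex j)

variable [NormedSpace ℝ E]

theorem setIntegral_orderedSimplex_zero [CompleteSpace E] (F : (Fin 0 → ℝ) → E) :
    ∫ s in orderedSimplex 0, F s = F default := by
  have : orderedSimplex 0 = univ := eq_univ_of_forall fun s => ⟨fun i => i.elim0, fun i => i.elim0⟩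
  rw [this, Measure.restrict_univ, integral_unique, volume_pi, Measure.pi_of_empty]
  simpa using congrArg F (Subsingleton.elim _ _)

theorem setIntegral_orderedSimplex_one (F : (Fin 1 → ℝ) → E) :
    ∫ s in orderedSimplex 1, F s = ∫ u in Icc 0 1, F fun _ => u := by
  let e := (MeasurableEquiv.funUnique (Fin 1) ℝ).symm
  have he : e ⁻¹' orderedSimplex 1 = Icc 0 1 := by
    ext u
    simp [e, orderedSimplex, Monotone]
  rw [← he]
  exact ((volume_preserving_funUnique (Fin 1) ℝ).symm.setIntegral_preimage_emb
    e.measurableEmbedding F _).symm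

theorem cons_mem_orderedSimplex_iff {n : ℕ} (u : ℝ) (s : Fin (n + 1) → ℝ) :
    (Fin.cons u s : Fin (n + 2) → ℝ) ∈ orderedSimplex (n + 2) ↔
      s ∈ orderedSimplex (n + 1) ∧ u ∈ Icc 0 (s 0) := by
  have hmono : Monotone (Fin.cons u s : Fin (n + 2) → ℝ) ↔ u ≤ s 0 ∧ Monotone s :=
    monotone_vecCons
  simp only [orderedSimplex, mem_ofPred_eq, hmono, Fin.forall_fin_succ, Fin.cons_zero,
    Fin.cons_succ, mem_Icc]
  exact ⟨fun ⟨⟨hu, hs⟩, ⟨hu0, _⟩, hb⟩ => ⟨⟨hs, hb⟩, hu0, hu⟩,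
    fun ⟨⟨hs, hb⟩, hu0, hu⟩ => ⟨⟨hu, hs⟩, ⟨hu0, hu.trans hb.1.2⟩, hb⟩⟩

theorem setIntegral_orderedSimplex_succ_succ [CompleteSpace E] {n : ℕ}
    {F : (Fin (n + 2) → ℝ) → E} (hF : IntegrableOn F (orderedSimplex (n + 2))) :
    ∫ s in orderedSimplex (n + 2), F s =
      ∫ s in orderedSimplex (n + 1), ∫ u in Icc 0 (s 0), F (Fin.cons u s) := by
  let e := (MeasurableEquiv.piFinSuccAbove (fun _ : Fin (n + 2) => ℝ) 0).symm
  have he : MeasurePreserving e (volume.prod volume) volume :=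
    (measurePreserving_piFinSuccAbove (fun _ => volume) 0).symm
  have he_apply (q : ℝ × (Fin (n + 1) → ℝ)) : e q = Fin.cons q.1 q.2 :=
    Fin.insertNth_zero' q.1 q.2
  let T := e ⁻¹' orderedSimplex (n + 2)
  have hT_meas : MeasurableSet T := e.measurable (measurableSet_orderedSimplex _)
  have hFe : IntegrableOn (fun q => F (e q)) T (volume.prod volume) :=
    (he.integrableOn_comp_preimage e.measurableEmbedding).2 hF
  rw [← he.setIntegral_preimage_emb e.measurableEmbedding, ← integral_indicator hT_meas,
    integral_prod_symm _ (hFe.integrable_indicator hT_meas),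
    ← integral_indicator (measurableSet_orderedSimplex _)]
  congr 1 with s
  by_cases hs : s ∈ orderedSimplex (n + 1)
  · rw [indicator_of_mem hs, ← integral_indicator measurableSet_Icc]
    simp [indicator, T, he_apply, cons_mem_orderedSimplex_iff, hs]
  · simp [indicator, T, he_apply, cons_mem_orderedSimplex_iff, hs]

end OrderedSimplex

section Dyson

variable {p : ℕ} (L D : Matrix (Fin p) (Fin p) ℂ)

theorem continuous_dysonProd (j : ℕ) :
    Continuous fun q : (Fin j → ℝ) × ℝ => dysonProd L D j q.1 q.2 := by
  induction j with
  | zero => simp only [dysonProd]; fun_prop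
  | succ j ih =>
    simp only [dysonProd]
    have hshift : Continuous fun q : (Fin (j + 1) → ℝ) × ℝ =>
        ((fun i : Fin j => q.1 i.succ), q.1 0) := by
      fun_prop
    exact Continuous.mul (by fun_prop) (ih.comp hshift)

/-- The integrand of the remainder `R_{n+1}`, a function on `Δ_{n+1}`. -/
noncomputable def dysonRemainder (n : ℕ) (s : Fin (n + 1) → ℝ) : Matrix (Fin p) (Fin p) ℂ :=
  exp (s 0 • (L + D)) * D * dysonProd L D n (fun i => s i.succ) (s 0)

theorem continuous_dysonRemainder (n : ℕ) : Continuous (dysonRemainder L D n) :=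
  Continuous.mul (by fun_prop)
    ((continuous_dysonProd L D n).comp
      (f := fun s : Fin (n + 1) → ℝ => (fun i : Fin n => s i.succ, s 0)) (by fun_prop))

theorem dysonRemainder_eq_dysonProd_add_integral (n : ℕ) {s : Fin (n + 1) → ℝ} (hs : 0 ≤ s 0) :
    dysonRemainder L D n s = dysonProd L D (n + 1) s 0 +
      ∫ u in Icc 0 (s 0), dysonRemainder L D (n + 1) (Fin.cons u s) := by
  have h := Matrix.exp_smul_mul_eq_add_integral (L + D) L
    (D * dysonProd L D n (fun i => s i.succ) (s 0)) hs
  simpa only [add_sub_cancel_left, dysonRemainder, dysonProd, Fin.cons_zero, Fin.cons_succ,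
    sub_zero, mul_assoc] using h

theorem setIntegral_dysonRemainder (n : ℕ) :
    ∫ s in orderedSimplex (n + 1), dysonRemainder L D n s =
      (∫ s in orderedSimplex (n + 1), dysonProd L D (n + 1) s 0) +
        ∫ s in orderedSimplex (n + 2), dysonRemainder L D (n + 1) s := by
  have hΔ := measurableSet_orderedSimplex (n + 1)
  have hcont : Continuous fun s : Fin (n + 1) → ℝ => dysonProd L D (n + 1) s 0 :=
    (continuous_dysonProd L D (n + 1)).comp (f := fun s => (s, 0)) (by fun_prop)
  have hprod := hcont.integrableOn_orderedSimplex
  have hrem := (continuous_dysonRemainder L D n).integrableOn_orderedSimplex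
  have hduhamel : EqOn (dysonRemainder L D n) (fun s => dysonProd L D (n + 1) s 0 +
      ∫ u in Icc 0 (s 0), dysonRemainder L D (n + 1) (Fin.cons u s)) (orderedSimplex (n + 1)) :=
    fun s hs => dysonRemainder_eq_dysonProd_add_integral L D n (hs.2 0).1
  have hinner := (hrem.sub hprod).congr_fun
    (g := fun s => ∫ u in Icc 0 (s 0), dysonRemainder L D (n + 1) (Fin.cons u s))
    (fun s hs => by simp [hduhamel hs]) hΔ
  rw [setIntegral_congr_fun hΔ hduhamel, integral_add hprod hinner,
    setIntegral_orderedSimplex_succ_succ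
      (continuous_dysonRemainder L D (n + 1)).integrableOn_orderedSimplex]

theorem exp_add_eq_sum_add_setIntegral_dysonRemainder (n : ℕ) :
    exp (L + D) =
      (∑ j ∈ Finset.range (n + 1), ∫ s in orderedSimplex j, dysonProd L D j s 0) +
        ∫ s in orderedSimplex (n + 1), dysonRemainder L D n s := by
  induction n with
  | zero =>
    rw [Finset.sum_range_one, setIntegral_orderedSimplex_zero, setIntegral_orderedSimplex_one]
    simpa [dysonRemainder, dysonProd] using
      Matrix.exp_smul_mul_eq_add_integral (L + D) L 1 zero_le_one
  | succ n ih => rw [Finset.sum_range_succ, ih, setIntegral_dysonRemainder, add_assoc]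

end Dyson

/-- Iterated Duhamel / Dyson expansion with remainder:
`exp(L + D) = Σ_{j=0}^{g−1} I_j + R_g`, where
`I_j = ∫_{Δ_j} exp(s_1 L)·D·exp((s_2−s_1)L)·D ⋯ D·exp((1−s_j)L) ds` (so `I_0 = exp L`) and
`R_g = ∫_{Δ_g} exp(s_1(L+D))·D·exp((s_2−s_1)L)·D ⋯ D·exp((1−s_g)L) ds`. -/
theorem matrix_dyson_expansion (p g : ℕ) (hg : 1 ≤ g)
    (L D : Matrix (Fin p) (Fin p) ℂ) :
    NormedSpace.exp (L + D) =
      (∑ j ∈ Finset.range g, ∫ s in orderedSimplex j, dysonProd L D j s 0) +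
        ∫ s in orderedSimplex g,
          NormedSpace.exp (s ⟨0, by omega⟩ • (L + D)) * D *
            dysonProd L D (g - 1)
              (fun i => s ⟨i.1 + 1, by have := i.isLt; omega⟩) (s ⟨0, by omega⟩) := by
  obtain ⟨n, rfl⟩ := Nat.exists_eq_add_of_le' hg
  exact exp_add_eq_sum_add_setIntegral_dysonRemainder L D n
end

section
/- (Simplex-integral expansion) Let p ≥ 1, m ≥ 1, and A_1, …, A_m ∈ M_p(ℂ). Write S_j = A_1 + A_2 + … + A_j for 1 ≤ j ≤ m. Then the series Σ_{k_1,…,k_m ≥ 0} (1/(k_1+…+k_m+m−1)!) · S_m^{k_m} · A_m · S_{m−1}^{k_{m−1}} · A_{m−1} ⋯ S_2^{k_2} · A_2 · S_1^{k_1} converges absolutely in M_p(ℂ), and it equals the integral over the set {(s_1,…,s_{m−1}) ∈ ℝ^{m−1} : s_i ≥ 0, s_1+…+s_{m−1} ≤ 1} (with Lebesgue measure, and with s_m := 1 − s_1 − … − s_{m−1}) of exp(s_m S_m) · A_m · exp(s_{m−1} S_{m−1}) · A_{m−1} ⋯ exp(s_2 S_2) · A_2 · exp(s_1 S_1). For m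 = 1 this is the identity Σ_{k≥0} A_1^k/k! = exp(A_1), and for m = 2 it reduces to Duhamel's formula. -/
/-!
Expanding every exponential into its power series writes the integrand at `s` as
`∑ₖ (∏ⱼ sⱼ^kⱼ / kⱼ!) • S_m^{k_m} A_m ⋯ A_2 S_1^{k_1}`, a series that converges absolutely because
all norms on the finite-dimensional matrix algebra are equivalent. Integrating term by term, the
Dirichlet integral `∫_Δ ∏ⱼ sⱼ^kⱼ ds = ∏ⱼ kⱼ! / (∑ⱼ kⱼ + m - 1)!` (by induction on the dimension,
slicing off one coordinate and using the beta integral) turns each coefficient into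
`1 / (∑ⱼ kⱼ + m - 1)!`. The interchange is justified by the same expansion at `s = (1, …, 1)`,
since `∏ⱼ kⱼ! ≤ (∑ⱼ kⱼ + m - 1)!`.
-/

open MeasureTheory

attribute [local instance] Matrix.normedAddCommGroup Matrix.normedSpace

/-- Descending product `S_j^{k_j} · A_j · S_{j−1}^{k_{j−1}} · A_{j−1} ⋯ S_1^{k_1} · A_1 · S_0^{k_0}`
(0-based indexing). -/
noncomputable def descPowProd {p : ℕ} (S A : ℕ → Matrix (Fin p) (Fin p) ℂ) (k : ℕ → ℕ) :
    ℕ → Matrix (Fin p) (Fin p) ℂ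
  | 0 => S 0 ^ k 0
  | j + 1 => S (j + 1) ^ k (j + 1) * A (j + 1) * descPowProd S A k j

/-- Descending product of exponentials
`exp(s_j S_j) · A_j · exp(s_{j−1} S_{j−1}) · A_{j−1} ⋯ exp(s_1 S_1) · A_1 · exp(s_0 S_0)`
(0-based indexing). -/
noncomputable def descExpProd {p : ℕ} (S A : ℕ → Matrix (Fin p) (Fin p) ℂ) (s : ℕ → ℝ) :
    ℕ → Matrix (Fin p) (Fin p) ℂ
  | 0 => NormedSpace.exp (s 0 • S 0)
  | j + 1 => NormedSpace.exp (s (j + 1) • S (j + 1)) * A (j + 1) * descExpProd S A s j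

section Beta

open scoped Nat

theorem intervalIntegral_pow_mul_sub_pow (a b : ℕ) (t : ℝ) :
    ∫ x in (0 : ℝ)..t, x ^ a * (t - x) ^ b = a ! * b ! * t ^ (a + b + 1) / (a + b + 1)! := by
  induction b generalizing a with
  | zero =>
    simp [integral_pow, Nat.factorial_succ]
    field_simp
  | succ b ih =>
    have hu : ∀ x ∈ Set.uIcc 0 t,
        HasDerivAt (fun x : ℝ => (t - x) ^ (b + 1)) (-((b + 1) * (t - x) ^ b)) x := fun x _ => by
      refine ((hasDerivAt_pow (b + 1) (t - x)).comp x
        ((hasDerivAt_id x).const_sub t)).congr_deriv ?_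
      push_cast
      ring
    have hv : ∀ x ∈ Set.uIcc 0 t,
        HasDerivAt (fun x : ℝ => x ^ (a + 1) / (a + 1)) (x ^ a) x := fun x _ => by
      refine ((hasDerivAt_pow (a + 1) x).div_const ((a : ℝ) + 1)).congr_deriv ?_
      push_cast
      field_simp
    have ibp := intervalIntegral.integral_mul_deriv_eq_deriv_mul hu hv
      (by apply Continuous.intervalIntegrable; fun_prop)
      (by apply Continuous.intervalIntegrable; fun_prop)
    calc ∫ x in (0 : ℝ)..t, x ^ a * (t - x) ^ (b + 1)
        = ∫ x in (0 : ℝ)..t, (t - x) ^ (b + 1) * x ^ a := by simp only [mul_comm]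
      _ = -∫ x in (0 : ℝ)..t, -((b + 1) * (t - x) ^ b) * (x ^ (a + 1) / (a + 1)) := by
        simp [ibp]
      _ = (b + 1) / (a + 1) * ∫ x in (0 : ℝ)..t, x ^ (a + 1) * (t - x) ^ b := by
        rw [← intervalIntegral.integral_neg, ← intervalIntegral.integral_const_mul]
        congr 1
        funext x
        field_simp
      _ = a ! * (b + 1)! * t ^ (a + (b + 1) + 1) / (a + (b + 1) + 1)! := by
        rw [ih, show a + 1 + b + 1 = a + (b + 1) + 1 by omega]
        push_cast [Nat.factorial_succ]
        field_simp

end Beta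

section Simplex

def solidSimplex (ι : Type*) [Fintype ι] (t : ℝ) : Set (ι → ℝ) :=
  {s | (∀ i, 0 ≤ s i) ∧ ∑ i, s i ≤ t}

variable {ι : Type*} [Fintype ι]

theorem isCompact_solidSimplex (t : ℝ) : IsCompact (solidSimplex ι t) := by
  have hclosed : IsClosed (solidSimplex ι t) := by
    rw [solidSimplex, Set.ofPred_and, Set.ofPred_forall]
    exact (isClosed_iInter fun i => isClosed_le continuous_const (continuous_apply i)).inter
        (isClosed_le (by fun_prop) continuous_const)
  refine Metric.isCompact_of_isClosed_isBounded hclosed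
    ((Metric.isBounded_Icc (0 : ι → ℝ) fun _ => t).subset fun s hs => ⟨hs.1, fun i => ?_⟩)
  exact (Finset.single_le_sum (fun j _ => hs.1 j) (Finset.mem_univ i)).trans hs.2

theorem measurableSet_solidSimplex (t : ℝ) : MeasurableSet (solidSimplex ι t) :=
  (isCompact_solidSimplex t).isClosed.measurableSet

theorem nonneg_of_mem_solidSimplex {t : ℝ} {s : ι → ℝ} (hs : s ∈ solidSimplex ι t) : 0 ≤ t :=
  (Finset.sum_nonneg fun i _ => hs.1 i).trans hs.2

theorem solidSimplex_eq_univ [IsEmpty ι] {t : ℝ} (ht : 0 ≤ t) : solidSimplex ι t = Set.univ :=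
  Set.eq_univ_of_forall fun _ => ⟨isEmptyElim, by simpa using ht⟩

theorem cons_mem_solidSimplex_iff {n : ℕ} {t x : ℝ} {y : Fin n → ℝ} :
    (Fin.cons x y : Fin (n + 1) → ℝ) ∈ solidSimplex (Fin (n + 1)) t ↔
      0 ≤ x ∧ y ∈ solidSimplex (Fin n) (t - x) := by
  simp only [solidSimplex, Set.mem_ofPred_eq, Fin.forall_fin_succ, Fin.sum_univ_succ,
    Fin.cons_zero, Fin.cons_succ, le_sub_iff_add_le', and_assoc]

theorem setIntegral_solidSimplex_succ {E : Type*} [NormedAddCommGroup E] [NormedSpace ℝ E]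
    {n : ℕ} {t : ℝ} {f : (Fin (n + 1) → ℝ) → E}
    (hf : IntegrableOn f (solidSimplex (Fin (n + 1)) t)) :
    ∫ s in solidSimplex (Fin (n + 1)) t, f s =
      ∫ x in Set.Icc 0 t, ∫ y in solidSimplex (Fin n) (t - x), f (Fin.cons x y) := by
  set S := solidSimplex (Fin (n + 1)) t
  have hmp := (volume_preserving_piFinSuccAbove (fun _ : Fin (n + 1) => ℝ) 0).symm
  have hcons : ∀ z : ℝ × (Fin n → ℝ),
      (MeasurableEquiv.piFinSuccAbove (fun _ => ℝ) 0).symm z = Fin.cons z.1 z.2 := fun z => by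
    simp [MeasurableEquiv.piFinSuccAbove_symm_apply, Fin.insertNthEquiv, Fin.insertNth_zero']
  have hslice : ∀ x y, S.indicator f (Fin.cons x y) = (Set.Icc 0 t).indicator
      (fun x => (solidSimplex (Fin n) (t - x)).indicator (fun y => f (Fin.cons x y)) y) x := by
    classical
    intro x y
    have hxt : y ∈ solidSimplex (Fin n) (t - x) → x ≤ t :=
      fun hy => sub_nonneg.1 (nonneg_of_mem_solidSimplex hy)
    simp only [Set.indicator_apply, S, cons_mem_solidSimplex_iff, Set.mem_Icc]
    split_ifs <;> first | rfl | (exfalso; tauto)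
  calc ∫ s in S, f s = ∫ s, S.indicator f s :=
        (integral_indicator (measurableSet_solidSimplex t)).symm
    _ = ∫ z : ℝ × (Fin n → ℝ), S.indicator f (Fin.cons z.1 z.2) := by
      rw [← hmp.integral_comp' (S.indicator f)]
      simp only [hcons]
    _ = ∫ x, ∫ y, S.indicator f (Fin.cons x y) := by
      refine integral_prod _ ?_
      have := (hmp.integrable_comp_emb (MeasurableEquiv.measurableEmbedding _)).2
        (hf.integrable_indicator (measurableSet_solidSimplex t))
      simp only [Function.comp_def, hcons] at this
      exact this
    _ = ∫ x in Set.Icc 0 t, ∫ y in solidSimplex (Fin n) (t - x), f (Fin.cons x y) := by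
      rw [← integral_indicator measurableSet_Icc]
      congr 1
      funext x
      simp only [hslice]
      by_cases hx : x ∈ Set.Icc 0 t
      · simp only [Set.indicator_of_mem hx, integral_indicator (measurableSet_solidSimplex _)]
      · simp [Set.indicator_of_notMem hx]

end Simplex

section Dirichlet

open scoped Nat

theorem setIntegral_solidSimplex_prod_pow_mul_pow (n : ℕ) (k : Fin n → ℕ) (e : ℕ) {t : ℝ}
    (ht : 0 ≤ t) :
    ∫ s in solidSimplex (Fin n) t, (∏ i, s i ^ k i) * (t - ∑ i, s i) ^ e =
      (∏ i, ((k i)! : ℝ)) * e ! * t ^ (∑ i, k i + e + n) / (∑ i, k i + e + n)! := by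
  induction n generalizing t with
  | zero =>
    rw [solidSimplex_eq_univ ht, Measure.restrict_univ]
    simp [Measure.real, volume_pi, Measure.pi_empty_univ]
    field_simp
  | succ n ih =>
    set M := ∑ i : Fin n, k i.succ + e + n
    set C : ℝ := (∏ i : Fin n, ((k i.succ)! : ℝ)) * e ! / (M ! : ℝ)
    have hslice : ∀ x ∈ Set.Icc 0 t,
        ∫ y in solidSimplex (Fin n) (t - x),
          (∏ i, (Fin.cons x y : Fin (n + 1) → ℝ) i ^ k i) * (t - ∑ i, Fin.cons x y i) ^ e =
        C * (x ^ k 0 * (t - x) ^ M) := by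
      intro x hx
      calc _ = x ^ k 0 * ∫ y in solidSimplex (Fin n) (t - x),
              (∏ i, y i ^ k i.succ) * (t - x - ∑ i, y i) ^ e := by
            rw [← integral_const_mul]
            simp only [Fin.prod_univ_succ, Fin.sum_univ_succ, Fin.cons_zero, Fin.cons_succ]
            congr 1
            funext y
            ring
        _ = C * (x ^ k 0 * (t - x) ^ M) := by
            rw [ih _ (sub_nonneg.2 hx.2)]
            ring
    rw [setIntegral_solidSimplex_succ
        ((Continuous.continuousOn (by fun_prop)).integrableOn_compact (isCompact_solidSimplex t)),
      setIntegral_congr_fun measurableSet_Icc hslice, integral_Icc_eq_integral_Ioc,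
      ← intervalIntegral.integral_of_le ht, intervalIntegral.integral_const_mul,
      intervalIntegral_pow_mul_sub_pow, Fin.prod_univ_succ, Fin.sum_univ_succ,
      show k 0 + M + 1 = k 0 + ∑ i : Fin n, k i.succ + e + (n + 1) by omega]
    simp only [C]
    field_simp

end Dirichlet

section MatrixSeries

open scoped Nat

theorem HasSum.mul_of_finiteDimensional {𝔸 ι κ : Type*} [NormedRing 𝔸] [NormedAlgebra ℝ 𝔸]
    [FiniteDimensional ℝ 𝔸] {f : ι → 𝔸} {g : κ → 𝔸} {a b : 𝔸} (hf : HasSum f a)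
    (hg : HasSum g b) : HasSum (fun x : ι × κ => f x.1 * g x.2) (a * b) :=
  hf.mul hg (summable_mul_of_summable_norm (summable_norm_iff.2 hf.summable)
    (summable_norm_iff.2 hg.summable))

variable {m 𝕜 : Type*} [Fintype m] [DecidableEq m] [RCLike 𝕜]

-- Both claims are topological, so they may be proved with the submultiplicative operator norm.

theorem Matrix.hasSum_mul {ι κ : Type*} {f : ι → Matrix m m 𝕜} {g : κ → Matrix m m 𝕜}
    {a b : Matrix m m 𝕜} (hf : HasSum f a) (hg : HasSum g b) :
    HasSum (fun x : ι × κ => f x.1 * g x.2) (a * b) := by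
  open scoped Matrix.Norms.Operator in exact hf.mul_of_finiteDimensional hg

theorem Matrix.hasSum_exp_series (x : Matrix m m 𝕜) :
    HasSum (fun n => (n !⁻¹ : ℝ) • x ^ n) (NormedSpace.exp x) := by
  open scoped Matrix.Norms.Operator in exact NormedSpace.exp_series_hasSum_exp' x

end MatrixSeries

section Expansion

open scoped Nat

variable {p : ℕ}

def extendByZero {m : ℕ} (k : Fin m → ℕ) (j : ℕ) : ℕ := if h : j < m then k ⟨j, h⟩ else 0

noncomputable def expCoeff {m : ℕ} (s : ℕ → ℝ) (k : Fin m → ℕ) : ℝ :=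
  ∏ j : Fin m, s j ^ k j / (k j)!

theorem expCoeff_snoc {n : ℕ} (s : ℕ → ℝ) (k : Fin n → ℕ) (j : ℕ) :
    expCoeff s (Fin.snoc k j : Fin (n + 1) → ℕ) = expCoeff s k * (s n ^ j / j !) := by
  simp only [expCoeff, Fin.prod_univ_castSucc, Fin.snoc_castSucc, Fin.snoc_last, Fin.val_castSucc,
    Fin.val_last]

theorem descPowProd_congr (S A : ℕ → Matrix (Fin p) (Fin p) ℂ) {k k' : ℕ → ℕ} {n : ℕ}
    (h : ∀ j ≤ n, k j = k' j) : descPowProd S A k n = descPowProd S A k' n := by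
  induction n with
  | zero => simp [descPowProd, h 0 le_rfl]
  | succ n ih => simp only [descPowProd, h (n + 1) le_rfl, ih fun j hj => h j (by omega)]

theorem descPowProd_extendByZero_snoc (S A : ℕ → Matrix (Fin p) (Fin p) ℂ) {n : ℕ}
    (k : Fin (n + 1) → ℕ) (j : ℕ) :
    descPowProd S A (extendByZero (Fin.snoc k j : Fin (n + 2) → ℕ)) (n + 1) =
      S (n + 1) ^ j * A (n + 1) * descPowProd S A (extendByZero k) n := by
  rw [descPowProd]
  congr 1
  · simp [extendByZero, Fin.snoc]
  · refine descPowProd_congr S A fun i hi => ?_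
    simp [extendByZero, Fin.snoc, show i < n + 1 by omega, show i < n + 2 by omega]

theorem hasSum_descExpProd (S A : ℕ → Matrix (Fin p) (Fin p) ℂ) (s : ℕ → ℝ) (n : ℕ) :
    HasSum (fun k : Fin (n + 1) → ℕ => expCoeff s k • descPowProd S A (extendByZero k) n)
      (descExpProd S A s n) := by
  induction n with
  | zero =>
    rw [← (Equiv.funUnique (Fin 1) ℕ).symm.hasSum_iff, descExpProd]
    convert Matrix.hasSum_exp_series (s 0 • S 0) using 1
    funext j
    simp [expCoeff, descPowProd, extendByZero, smul_pow, smul_smul, div_eq_inv_mul]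
  | succ n ih =>
    rw [← (Fin.snocEquiv fun _ => ℕ).hasSum_iff, descExpProd, mul_assoc]
    convert Matrix.hasSum_mul (Matrix.hasSum_exp_series (s (n + 1) • S (n + 1)))
      (ih.mul_left (A (n + 1))) using 1
    funext ⟨j, k⟩
    simp only [Fin.snocEquiv, Equiv.coe_fn_mk, Function.comp_apply, expCoeff_snoc,
      descPowProd_extendByZero_snoc, smul_pow, smul_mul_assoc, mul_smul_comm, smul_smul, mul_assoc]
    congr 1
    ring

end Expansion

section Coefficients

open scoped Nat

noncomputable def barycentric {n : ℕ} (σ : Fin n → ℝ) (j : ℕ) : ℝ :=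
  if h : j < n then σ ⟨j, h⟩ else 1 - ∑ i, σ i

variable {n : ℕ}

theorem continuous_barycentric (j : ℕ) : Continuous fun σ : Fin n → ℝ => barycentric σ j := by
  unfold barycentric
  split <;> fun_prop

theorem barycentric_nonneg {σ : Fin n → ℝ} (hσ : σ ∈ solidSimplex (Fin n) 1) (j : ℕ) :
    0 ≤ barycentric σ j := by
  unfold barycentric
  split
  · exact hσ.1 _
  · exact sub_nonneg.2 hσ.2

theorem continuous_expCoeff_barycentric (k : Fin (n + 1) → ℕ) :
    Continuous fun σ : Fin n → ℝ => expCoeff (barycentric σ) k := by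
  unfold expCoeff
  have := continuous_barycentric (n := n)
  fun_prop

theorem expCoeff_barycentric_nonneg {σ : Fin n → ℝ} (hσ : σ ∈ solidSimplex (Fin n) 1)
    (k : Fin (n + 1) → ℕ) : 0 ≤ expCoeff (barycentric σ) k :=
  Finset.prod_nonneg fun j _ => by have := barycentric_nonneg hσ j; positivity

theorem expCoeff_barycentric (σ : Fin n → ℝ) (k : Fin (n + 1) → ℕ) :
    expCoeff (barycentric σ) k = (∏ j, ((k j)! : ℝ)⁻¹) *
      ((∏ i : Fin n, σ i ^ k i.castSucc) * (1 - ∑ i, σ i) ^ k (Fin.last n)) := by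
  simp only [expCoeff, div_eq_mul_inv, Finset.prod_mul_distrib, Fin.prod_univ_castSucc,
    barycentric, Fin.val_castSucc, Fin.val_last, Fin.is_lt, dif_pos, lt_irrefl, dif_neg,
    not_false_eq_true, Fin.eta]
  ring

theorem setIntegral_expCoeff_barycentric (k : Fin (n + 1) → ℕ) :
    ∫ σ in solidSimplex (Fin n) 1, expCoeff (barycentric σ) k = ((∑ j, k j + n)! : ℝ)⁻¹ := by
  simp_rw [expCoeff_barycentric, integral_const_mul]
  rw [setIntegral_solidSimplex_prod_pow_mul_pow n _ _ zero_le_one, one_pow,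
    ← Fin.sum_univ_castSucc, Fin.prod_univ_castSucc, Finset.prod_inv_distrib]
  field_simp

theorem inv_factorial_sum_add_le_prod {ι : Type*} [Fintype ι] (k : ι → ℕ) (n : ℕ) :
    ((∑ i, k i + n)! : ℝ)⁻¹ ≤ ∏ i, ((k i)! : ℝ)⁻¹ := by
  rw [Finset.prod_inv_distrib]
  refine inv_anti₀ (by positivity) ?_
  have hdvd := Nat.prod_factorial_dvd_factorial_sum Finset.univ k
  exact_mod_cast (Nat.le_of_dvd (Nat.factorial_pos _) hdvd).trans
    (Nat.factorial_le (Nat.le_add_right _ n))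

theorem summable_inv_factorial_mul_norm_descPowProd {p : ℕ} (S A : ℕ → Matrix (Fin p) (Fin p) ℂ) :
    Summable fun k : Fin (n + 1) → ℕ =>
      ((∑ j, k j + n)! : ℝ)⁻¹ * ‖descPowProd S A (extendByZero k) n‖ := by
  have h := summable_norm_iff.2 (hasSum_descExpProd S A (fun _ => 1) n).summable
  refine h.of_nonneg_of_le (fun k => by positivity) fun k => ?_
  rw [norm_smul, Real.norm_of_nonneg (by unfold expCoeff; positivity)]
  gcongr
  simpa [expCoeff] using inv_factorial_sum_add_le_prod k n

end Coefficients

theorem matrix_simplex_integral_expansion_general (p m : ℕ) (hm : 1 ≤ m)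
    (A : ℕ → Matrix (Fin p) (Fin p) ℂ) :
    Summable (fun k : Fin m → ℕ =>
      ‖((Nat.factorial ((∑ j, k j) + m - 1) : ℝ))⁻¹ •
        descPowProd (fun j => ∑ i ∈ Finset.range (j + 1), A i) A
          (fun j => if h : j < m then k ⟨j, h⟩ else 0) (m - 1)‖) ∧
    HasSum (fun k : Fin m → ℕ =>
      ((Nat.factorial ((∑ j, k j) + m - 1) : ℝ))⁻¹ •
        descPowProd (fun j => ∑ i ∈ Finset.range (j + 1), A i) A
          (fun j => if h : j < m then k ⟨j, h⟩ else 0) (m - 1))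
      (∫ s in {s : Fin (m - 1) → ℝ | (∀ i, 0 ≤ s i) ∧ ∑ i, s i ≤ 1},
        descExpProd (fun j => ∑ i ∈ Finset.range (j + 1), A i) A
          (fun j => if h : j < m - 1 then s ⟨j, h⟩ else 1 - ∑ i, s i) (m - 1)) := by
  obtain ⟨n, rfl⟩ : ∃ n, m = n + 1 := ⟨m - 1, by omega⟩
  set S : ℕ → Matrix (Fin p) (Fin p) ℂ := fun j => ∑ i ∈ Finset.range (j + 1), A i
  set M := fun k : Fin (n + 1) → ℕ => descPowProd S A (extendByZero k) n
  show Summable (fun k => ‖((∑ j, k j + n).factorial : ℝ)⁻¹ • M k‖) ∧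
    HasSum (fun k => ((∑ j, k j + n).factorial : ℝ)⁻¹ • M k)
      (∫ σ in solidSimplex (Fin n) 1, descExpProd S A (barycentric σ) n)
  have hsum := summable_inv_factorial_mul_norm_descPowProd (n := n) S A
  have hnorm (k : Fin (n + 1) → ℕ) :
      ∫ σ in solidSimplex (Fin n) 1, ‖expCoeff (barycentric σ) k • M k‖ =
        ((∑ j, k j + n).factorial : ℝ)⁻¹ * ‖M k‖ := by
    rw [setIntegral_congr_fun (measurableSet_solidSimplex 1) fun σ hσ => by
      rw [norm_smul, Real.norm_of_nonneg (expCoeff_barycentric_nonneg hσ k)],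
      integral_mul_const, setIntegral_expCoeff_barycentric]
  have htermwise := hasSum_integral_of_summable_integral_norm
    (fun k => ((continuous_expCoeff_barycentric k).continuousOn.integrableOn_compact
      (isCompact_solidSimplex 1)).smul_const (M k)) (hsum.congr fun k => (hnorm k).symm)
  simp only [integral_smul_const, setIntegral_expCoeff_barycentric] at htermwise
  refine ⟨hsum.congr fun k => ?_, ?_⟩
  · rw [norm_smul, Real.norm_of_nonneg (by positivity)]
  · rwa [integral_congr_ae (ae_of_all _ fun σ =>
      (hasSum_descExpProd S A (barycentric σ) n).tsum_eq.symm)]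

/-- Simplex-integral expansion: for `S_j = A_1 + … + A_j`, the series
`Σ_{k_1,…,k_m ≥ 0} (1/(k_1+…+k_m+m−1)!) · S_m^{k_m} · A_m ⋯ S_2^{k_2} · A_2 · S_1^{k_1}`
converges absolutely and equals
`∫_{{s ∈ ℝ^{m−1} : s_i ≥ 0, Σ s_i ≤ 1}} exp(s_m S_m) · A_m ⋯ exp(s_2 S_2) · A_2 · exp(s_1 S_1) ds`
with `s_m := 1 − s_1 − … − s_{m−1}`. (Everything written with 0-based indices.) -/
theorem matrix_simplex_integral_expansion (p m : ℕ) (hp : 1 ≤ p) (hm : 1 ≤ m)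
    (A : ℕ → Matrix (Fin p) (Fin p) ℂ) :
    Summable (fun k : Fin m → ℕ =>
      ‖((Nat.factorial ((∑ j, k j) + m - 1) : ℝ))⁻¹ •
        descPowProd (fun j => ∑ i ∈ Finset.range (j + 1), A i) A
          (fun j => if h : j < m then k ⟨j, h⟩ else 0) (m - 1)‖) ∧
    HasSum (fun k : Fin m → ℕ =>
      ((Nat.factorial ((∑ j, k j) + m - 1) : ℝ))⁻¹ •
        descPowProd (fun j => ∑ i ∈ Finset.range (j + 1), A i) A
          (fun j => if h : j < m then k ⟨j, h⟩ else 0) (m - 1))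
      (∫ s in {s : Fin (m - 1) → ℝ | (∀ i, 0 ≤ s i) ∧ ∑ i, s i ≤ 1},
        descExpProd (fun j => ∑ i ∈ Finset.range (j + 1), A i) A
          (fun j => if h : j < m - 1 then s ⟨j, h⟩ else 1 - ∑ i, s i) (m - 1)) :=
  matrix_simplex_integral_expansion_general p m hm A
end

section
/- (Multiplicativity of relative cumulants over blocks) Let n ≥ 1, let α be a family of complex numbers indexed by the subsets of {1,…,n}, and let (β_{π,ν})_{π ≤ ν} be the unique family such that α_ν = Σ_{π ≤ π' ≤ ν} β_{π,π'} for all partitions π ≤ ν of {1,…,n}, where α_π = Π_{A ∈ π} α_A. For a block A of a partition ν and π ≤ ν, let π↾A denote the partition of the set A whose blocks are the blocks of π contained in A, and let (β^{(A)}_{ρ,η}) be the family defined analogously from the restriction of α to subsets of A (indexed by pairs of partitions of A). Then for every pair of partitions π ≤ ν of {1,…,n}: β_{π,ν} = Π_{A ∈ ν} β^{(A)}_{π↾A, 1_A}, where 1_A is the one-block partition of A. -/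
/-!
Relative cumulants invert the triangular system `α_ν = ∑_{π ≤ π' ≤ ν} β_{π,π'}`, so they are
determined by it (induction on `ν`). For a partition `η` of `A`, the interval `[ρ, η]` is the
product of the intervals `[ρ↾D, 1_D]` over the blocks `D` of `η`, and `α_η` factors in the same
way. Hence, by strong induction on `|A|`, the products `∏_{E ∈ σ} β^{(E)}_{ρ↾E, 1_E}` solve the
system defining `β^{(A)}_{ρ,σ}` on every interval below an `η ≠ 1_A`, and so coincide with it;
for `η = 1_A` there is nothing to prove.
-/

open scoped Classical

open Finset

namespace Finpartition

variable {α : Type*} [DecidableEq α] {s A D E : Finset α}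

/-- The partition `P↾A` of `A`: when `A` is a union of blocks of `P`, its blocks are the blocks of
`P` contained in `A`. For `A ⊄ s` it is the junk value `⊥`. -/
noncomputable def restrictTo (P : Finpartition s) (A : Finset α) : Finpartition A :=
  if h : A ⊆ s then P.restrict h else ⊥

lemma restrictTo_of_subset (P : Finpartition s) (h : A ⊆ s) : P.restrictTo A = P.restrict h :=
  dif_pos h

lemma mem_restrictTo_parts {π ν : Finpartition s} (h : π ≤ ν) (hA : A ∈ ν.parts) {b : Finset α} :
    b ∈ (π.restrictTo A).parts ↔ b ∈ π.parts ∧ b ⊆ A := by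
  rw [restrictTo_of_subset π (ν.le hA)]
  simp only [restrict, mem_erase, mem_image]
  constructor
  · rintro ⟨hb, c, hc, rfl⟩
    obtain ⟨d, hd, hcd⟩ := h hc
    obtain rfl | hdA := eq_or_ne d A
    · rw [inf_eq_left.2 hcd]; exact ⟨hc, hcd⟩
    · exact absurd (((ν.disjoint hd hA hdA).mono_left hcd).eq_bot) hb
  · rintro ⟨hb, hbA⟩
    exact ⟨π.ne_bot hb, b, hb, inf_eq_left.2 hbA⟩

lemma restrictTo_self (P : Finpartition s) : P.restrictTo s = P := by
  ext b
  rw [restrictTo_of_subset P subset_rfl]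
  simp only [restrict, mem_erase, mem_image]
  constructor
  · rintro ⟨-, c, hc, rfl⟩
    rwa [inf_eq_left.2 (P.le hc)]
  · intro hb
    exact ⟨P.ne_bot hb, b, hb, inf_eq_left.2 (P.le hb)⟩

lemma restrictTo_mono {π σ : Finpartition s} (h : π ≤ σ) (A : Finset α) :
    π.restrictTo A ≤ σ.restrictTo A := by
  by_cases hA : A ⊆ s
  · rw [restrictTo_of_subset π hA, restrictTo_of_subset σ hA]
    intro b hb
    simp only [restrict, mem_erase, mem_image] at hb
    obtain ⟨hb, c, hc, rfl⟩ := hb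
    obtain ⟨d, hd, hcd⟩ := h hc
    refine ⟨d ⊓ A, ?_, inf_le_inf_right A hcd⟩
    simp only [restrict, mem_erase, mem_image]
    exact ⟨ne_bot_of_le_ne_bot hb (inf_le_inf_right A hcd), d, hd, rfl⟩
  · simp only [restrictTo, dif_neg hA, le_rfl]

lemma restrictTo_restrictTo (P : Finpartition s) (hA : A ⊆ s) (hE : E ⊆ A) :
    (P.restrictTo A).restrictTo E = P.restrictTo E := by
  ext b
  rw [restrictTo_of_subset _ hE, restrictTo_of_subset P hA, restrictTo_of_subset P (hE.trans hA)]
  simp only [restrict, mem_erase, mem_image]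
  constructor
  · rintro ⟨hb, c, ⟨-, d, hd, rfl⟩, rfl⟩
    exact ⟨hb, d, hd, by rw [inf_assoc, inf_eq_right.2 hE]⟩
  · rintro ⟨hb, d, hd, rfl⟩
    refine ⟨hb, d ⊓ A, ⟨?_, d, hd, rfl⟩, by rw [inf_assoc, inf_eq_right.2 hE]⟩
    exact ne_bot_of_le_ne_bot hb (inf_le_inf_left d hE)

lemma restrictTo_of_mem_parts (P : Finpartition s) (hA : A ∈ P.parts) : P.restrictTo A = ⊤ := by
  refine eq_top_iff.2 fun b hb => ⟨b, ?_, le_rfl⟩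
  obtain rfl := Finset.mem_singleton.1 (parts_top_subset A hb)
  rw [mem_restrictTo_parts le_rfl hA]
  exact ⟨hA, subset_rfl⟩

lemma bind_le (η : Finpartition s) (p : ∀ D ∈ η.parts, Finpartition D) : η.bind p ≤ η := by
  intro b hb
  obtain ⟨D, hD, hbD⟩ := mem_bind.1 hb
  exact ⟨D, hD, (p D hD).le hbD⟩

lemma restrictTo_bind (η : Finpartition s) (p : ∀ D ∈ η.parts, Finpartition D)
    (hD : D ∈ η.parts) : (η.bind p).restrictTo D = p D hD := by
  ext b
  rw [mem_restrictTo_parts (bind_le η p) hD, mem_bind]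
  constructor
  · rintro ⟨⟨D', hD', hb⟩, hbD⟩
    obtain ⟨a, ha⟩ := (p D' hD').nonempty_of_mem_parts hb
    obtain rfl : D' = D := η.eq_of_mem_parts hD' hD ((p D' hD').le hb ha) (hbD ha)
    exact hb
  · exact fun hb => ⟨⟨D, hD, hb⟩, (p D hD).le hb⟩

lemma bind_restrictTo {σ η : Finpartition s} (h : σ ≤ η) :
    η.bind (fun D _ => σ.restrictTo D) = σ := by
  ext b
  rw [mem_bind]
  constructor
  · rintro ⟨D, hD, hb⟩
    exact ((mem_restrictTo_parts h hD).1 hb).1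
  · intro hb
    obtain ⟨D, hD, hbD⟩ := h hb
    exact ⟨D, hD, (mem_restrictTo_parts h hD).2 ⟨hb, hbD⟩⟩

variable {R : Type*} [CommRing R]

lemma prod_parts_eq_prod_prod_restrictTo {σ η : Finpartition s} (h : σ ≤ η) (f : Finset α → R) :
    ∏ E ∈ σ.parts, f E = ∏ D ∈ η.parts, ∏ E ∈ (σ.restrictTo D).parts, f E := by
  conv_lhs => rw [← bind_restrictTo h, bind_parts]
  rw [prod_biUnion, ← prod_attach η.parts]
  rintro ⟨D, hD⟩ - ⟨D', hD'⟩ - hne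
  refine Finset.disjoint_left.2 fun b hb hb' => hne (Subtype.ext ?_)
  rw [mem_restrictTo_parts h hD] at hb
  rw [mem_restrictTo_parts h hD'] at hb'
  obtain ⟨a, ha⟩ := σ.nonempty_of_mem_parts hb.1
  exact η.eq_of_mem_parts hD hD' (hb.2 ha) (hb'.2 ha)

lemma sum_filter_prod_restrictTo {ρ η : Finpartition s} (h : ρ ≤ η)
    (F : ∀ D : Finset α, Finpartition D → R) :
    ∑ σ ∈ univ.filter (fun σ => ρ ≤ σ ∧ σ ≤ η), ∏ D ∈ η.parts, F D (σ.restrictTo D) =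
      ∏ D ∈ η.parts, ∑ τ ∈ univ.filter (fun τ => ρ.restrictTo D ≤ τ), F D τ := by
  rw [prod_sum]
  symm
  refine sum_bij' (fun p _ => η.bind p) (fun σ _ D _ => σ.restrictTo D) ?_ ?_ ?_ ?_ ?_
  · intro p hp
    simp only [mem_pi, mem_filter, mem_univ, true_and] at hp ⊢
    refine ⟨fun b hb => ?_, bind_le η p⟩
    obtain ⟨D, hD, hbD⟩ := h hb
    obtain ⟨c, hc, hbc⟩ := hp D hD ((mem_restrictTo_parts h hD).2 ⟨hb, hbD⟩)
    exact ⟨c, mem_bind.2 ⟨D, hD, hc⟩, hbc⟩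
  · intro σ hσ
    simp only [mem_pi, mem_filter, mem_univ, true_and] at hσ ⊢
    exact fun D _ => restrictTo_mono hσ.1 D
  · intro p _
    funext D hD
    exact restrictTo_bind η p hD
  · intro σ hσ
    exact bind_restrictTo (mem_filter.1 hσ).2.2
  · intro p _
    rw [← prod_attach η.parts]
    exact prod_congr rfl fun D _ => by rw [restrictTo_bind η p D.2]

lemma indiscrete_eq_top (hs : s ≠ ⊥) : indiscrete hs = ⊤ :=
  top_unique fun _ hb => ⟨s, mem_singleton_self s, Finpartition.le _ hb⟩

lemma parts_top (hs : s ≠ ⊥) : (⊤ : Finpartition s).parts = {s} := by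
  rw [← indiscrete_eq_top hs, indiscrete_parts]

end Finpartition

theorem eq_of_forall_sum_filter_Icc_eq {P M : Type*} [PartialOrder P] [Fintype P] [AddCommGroup M]
    {f g : P → M} {π ν : P} (hπν : π ≤ ν)
    (h : ∀ ν', π ≤ ν' → ν' ≤ ν → ∑ σ ∈ univ.filter (fun σ => π ≤ σ ∧ σ ≤ ν'), f σ =
      ∑ σ ∈ univ.filter (fun σ => π ≤ σ ∧ σ ≤ ν'), g σ) :
    f ν = g ν := by
  induction ν using WellFoundedLT.induction with
  | ind ν ih =>
    have hν : ν ∈ univ.filter (fun σ => π ≤ σ ∧ σ ≤ ν) := by simpa using hπν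
    have hsum := h ν hπν le_rfl
    have htail : ∑ σ ∈ (univ.filter (fun σ => π ≤ σ ∧ σ ≤ ν)).erase ν, f σ =
        ∑ σ ∈ (univ.filter (fun σ => π ≤ σ ∧ σ ≤ ν)).erase ν, g σ := by
      refine sum_congr rfl fun σ hσ => ?_
      obtain ⟨hσν, hσ⟩ := mem_erase.1 hσ
      obtain ⟨hπσ, hσν'⟩ := (mem_filter.1 hσ).2
      exact ih σ (lt_of_le_of_ne hσν' hσν) hπσ fun ν' h₁ h₂ => h ν' h₁ (h₂.trans hσν')
    rw [← add_sum_erase _ _ hν, ← add_sum_erase _ _ hν, htail] at hsum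
    exact add_right_cancel hsum

section RelativeCumulants

variable {α R : Type*} [DecidableEq α] [CommRing R]

/-- `b π ν` plays the role of `β_{π,ν}`; its values at `π ≰ ν` are unconstrained. -/
def IsRelativeCumulantFamily {s : Finset α} (a : Finset α → R)
    (b : Finpartition s → Finpartition s → R) : Prop :=
  ∀ π ν : Finpartition s, π ≤ ν →
    ∏ A ∈ ν.parts, a A = ∑ π' ∈ univ.filter (fun π' => π ≤ π' ∧ π' ≤ ν), b π π'

namespace IsRelativeCumulantFamily

variable {s : Finset α} {a : Finset α → R} {b : Finpartition s → Finpartition s → R}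

theorem eq {b' : Finpartition s → Finpartition s → R} (hb : IsRelativeCumulantFamily a b)
    (hb' : IsRelativeCumulantFamily a b') {π ν : Finpartition s} (h : π ≤ ν) : b π ν = b' π ν :=
  eq_of_forall_sum_filter_Icc_eq h fun ν' h₁ _ => (hb π ν' h₁).symm.trans (hb' π ν' h₁)

theorem apply_eq_sum_filter_le (hb : IsRelativeCumulantFamily a b) (hs : s ≠ ⊥)
    (ρ : Finpartition s) : a s = ∑ τ ∈ univ.filter (fun τ => ρ ≤ τ), b ρ τ := by
  rw [← prod_singleton a s, ← Finpartition.parts_top hs, hb ρ ⊤ le_top]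
  exact sum_congr (filter_congr fun τ _ => and_iff_left le_top) fun _ _ => rfl

end IsRelativeCumulantFamily

open Finpartition in
theorem relativeCumulant_eq_prod_parts {a : Finset α → R}
    {B : ∀ A : Finset α, Finpartition A → Finpartition A → R}
    (hB : ∀ A, IsRelativeCumulantFamily a (B A)) {s : Finset α} {ρ η : Finpartition s}
    (h : ρ ≤ η) : B s ρ η = ∏ D ∈ η.parts, B D (ρ.restrictTo D) ⊤ := by
  induction s using Finset.strongInduction with
  | H s ih =>
  by_cases hs : s ∈ η.parts
  · have hs₀ := η.ne_bot hs
    obtain rfl : η = ⊤ := by rw [← restrictTo_self η, restrictTo_of_mem_parts η hs]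
    rw [parts_top hs₀, prod_singleton, restrictTo_self]
  have hssubset : ∀ ν ≤ η, ∀ D ∈ ν.parts, D ⊂ s := by
    intro ν hνη D hD
    obtain ⟨D', hD', hDD'⟩ := hνη hD
    exact Finset.ssubset_of_subset_of_ssubset hDD'
      (ssubset_of_subset_of_ne (η.le hD') fun h => hs (h ▸ hD'))
  refine eq_of_forall_sum_filter_Icc_eq (g := fun σ => ∏ D ∈ σ.parts, B D (ρ.restrictTo D) ⊤) h
    fun ν hρν hνη => ?_
  calc ∑ σ ∈ univ.filter (fun σ => ρ ≤ σ ∧ σ ≤ ν), B s ρ σ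
      = ∏ D ∈ ν.parts, a D := (hB s ρ ν hρν).symm
    _ = ∏ D ∈ ν.parts, ∑ τ ∈ univ.filter (fun τ => ρ.restrictTo D ≤ τ), B D (ρ.restrictTo D) τ :=
        prod_congr rfl fun D hD => (hB D).apply_eq_sum_filter_le (ν.ne_bot hD) _
    _ = ∑ σ ∈ univ.filter (fun σ => ρ ≤ σ ∧ σ ≤ ν),
          ∏ D ∈ ν.parts, B D (ρ.restrictTo D) (σ.restrictTo D) :=
        (sum_filter_prod_restrictTo hρν _).symm
    _ = ∑ σ ∈ univ.filter (fun σ => ρ ≤ σ ∧ σ ≤ ν), ∏ E ∈ σ.parts, B E (ρ.restrictTo E) ⊤ := by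
        refine sum_congr rfl fun σ hσ => ?_
        obtain ⟨hρσ, hσν⟩ := (mem_filter.1 hσ).2
        rw [prod_parts_eq_prod_prod_restrictTo hσν]
        refine prod_congr rfl fun D hD => ?_
        have hDs := hssubset ν hνη D hD
        rw [ih D hDs (restrictTo_mono hρσ D)]
        refine prod_congr rfl fun E hE => ?_
        rw [restrictTo_restrictTo ρ hDs.subset ((σ.restrictTo D).le hE)]

end RelativeCumulants

theorem relative_cumulants_multiplicative_general (n : ℕ)
    (α : Finset (Fin n) → ℂ)
    (β : Finpartition (Finset.univ : Finset (Fin n)) →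
      Finpartition (Finset.univ : Finset (Fin n)) → ℂ)
    (hβ : ∀ π ν : Finpartition (Finset.univ : Finset (Fin n)), π ≤ ν →
      (∏ A ∈ ν.parts, α A) =
        ∑ π' ∈ Finset.univ.filter (fun π' => π ≤ π' ∧ π' ≤ ν), β π π')
    (B : ∀ A : Finset (Fin n), Finpartition A → Finpartition A → ℂ)
    (hB : ∀ A : Finset (Fin n), ∀ ρ η : Finpartition A, ρ ≤ η →
      (∏ C ∈ η.parts, α C) =
        ∑ ρ' ∈ Finset.univ.filter (fun ρ' => ρ ≤ ρ' ∧ ρ' ≤ η), B A ρ ρ') :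
    ∀ π ν : Finpartition (Finset.univ : Finset (Fin n)), π ≤ ν →
      ∀ ρ : ∀ A ∈ ν.parts, Finpartition A,
        (∀ (A : Finset (Fin n)) (hA : A ∈ ν.parts),
          (ρ A hA).parts = π.parts.filter (fun b => b ⊆ A)) →
        β π ν = ∏ A ∈ ν.parts.attach,
          B A.1 (ρ A.1 A.2)
            (Finpartition.indiscrete (ne_of_mem_of_not_mem A.2 ν.bot_notMem)) := by
  intro π ν hπν ρ hρ
  have hρ_eq : ∀ A (hA : A ∈ ν.parts), ρ A hA = π.restrictTo A := fun A hA => by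
    ext b
    rw [hρ A hA, mem_filter, Finpartition.mem_restrictTo_parts hπν hA]
  rw [IsRelativeCumulantFamily.eq hβ (hB univ) hπν, relativeCumulant_eq_prod_parts hB hπν,
    ← prod_attach]
  exact prod_congr rfl fun A _ => by rw [hρ_eq, Finpartition.indiscrete_eq_top]

/-- Multiplicativity of relative cumulants over blocks: if `β` is the family of relative
coefficients of `α` (i.e. `α_ν = Σ_{π ≤ π' ≤ ν} β_{π,π'}` for all pairs of partitions `π ≤ ν` of
`{1,…,n}`), and if for each subset `A ⊆ {1,…,n}` the family `B A` is the analogous family of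
relative coefficients built from the restriction of `α` to subsets of `A`, then for all `π ≤ ν`:
`β_{π,ν} = Π_{A ∈ ν} B^{(A)}_{π↾A, 1_A}`, where `π↾A` is the partition of the block `A` whose
blocks are the blocks of `π` contained in `A`, and `1_A` is the one-block partition of `A`. -/
theorem relative_cumulants_multiplicative (n : ℕ) (hn : 1 ≤ n)
    (α : Finset (Fin n) → ℂ)
    (β : Finpartition (Finset.univ : Finset (Fin n)) →
      Finpartition (Finset.univ : Finset (Fin n)) → ℂ)
    (hβ : ∀ π ν : Finpartition (Finset.univ : Finset (Fin n)), π ≤ ν →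
      (∏ A ∈ ν.parts, α A) =
        ∑ π' ∈ Finset.univ.filter (fun π' => π ≤ π' ∧ π' ≤ ν), β π π')
    (B : ∀ A : Finset (Fin n), Finpartition A → Finpartition A → ℂ)
    (hB : ∀ A : Finset (Fin n), ∀ ρ η : Finpartition A, ρ ≤ η →
      (∏ C ∈ η.parts, α C) =
        ∑ ρ' ∈ Finset.univ.filter (fun ρ' => ρ ≤ ρ' ∧ ρ' ≤ η), B A ρ ρ') :
    ∀ π ν : Finpartition (Finset.univ : Finset (Fin n)), π ≤ ν →
      ∀ ρ : ∀ A ∈ ν.parts, Finpartition A,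
        (∀ (A : Finset (Fin n)) (hA : A ∈ ν.parts),
          (ρ A hA).parts = π.parts.filter (fun b => b ⊆ A)) →
        β π ν = ∏ A ∈ ν.parts.attach,
          B A.1 (ρ A.1 A.2)
            (Finpartition.indiscrete (ne_of_mem_of_not_mem A.2 ν.bot_notMem)) :=
  relative_cumulants_multiplicative_general n α β hβ B hB
end
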